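/- arXiv:2402.16855 — 7 statements merged into one kernel-verified Lean document; each statement's English description precedes it below -/
import Mathlib

section
/- Let n ≥ 1, let p, r, a ∈ ℝⁿ with pᵢ ≥ 0 and rᵢ > 0 for all i, let α, β > 0 with α + β = 1, and let q belong to the feasible set C = {q ∈ ℝⁿ : Σᵢ qᵢ = 1 and 0 ≤ qᵢ ≤ aᵢ for all i}. Suppose there are indices i ≠ j such that pᵢ = 0, qᵢ > 0, pⱼ > 0, and qⱼ + qᵢ ≤ aⱼ. Define q' by q'ᵢ = 0, q'ⱼ = qⱼ + qᵢ, and q'ₖ = qₖ for all k ∉ {i, j}. Then q' ∈ C and f(q') < f(q), where f(q) = −Σₖ pₖ · log(α·qₖ + β·rₖ). In particular, such a q is not a minimizer of f on C. -/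
/-!
Since `p i = 0`, the coordinate `i` does not enter the objective, so its mass can be moved to `j`
for free; there it strictly raises the argument of the logarithm, whose weight `p j` is positive.
-/

open Finset

section MoveMass

variable {ι : Type*} [Fintype ι] [DecidableEq ι]

def moveMass {M : Type*} [AddCommMonoid M] (q : ι → M) (i j : ι) : ι → M :=
  fun k => if k = i then 0 else if k = j then q j + q i else q k

theorem sum_moveMass {M : Type*} [AddCommMonoid M] (q : ι → M) {i j : ι} (hij : i ≠ j) :
    ∑ k, moveMass q i j k = ∑ k, q k := by
  have hj : j ∈ univ.erase i := mem_erase.2 ⟨hij.symm, mem_univ j⟩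
  have hoff : ∀ k ∈ univ.erase i, moveMass q i j k = q k + if k = j then q i else 0 := by
    intro k hk
    simp only [moveMass, if_neg (ne_of_mem_erase hk)]
    split_ifs with hkj
    · rw [hkj]
    · rw [add_zero]
  rw [← add_sum_erase _ _ (mem_univ i), sum_congr rfl hoff, sum_add_distrib,
    sum_ite_eq' _ _ (fun _ => q i), if_pos hj, ← add_sum_erase univ q (mem_univ i),
    show moveMass q i j i = 0 from if_pos rfl, zero_add, add_comm]

def cappedSimplex (a : ι → ℝ) : Set (ι → ℝ) :=
  {q | ∑ k, q k = 1 ∧ ∀ k, 0 ≤ q k ∧ q k ≤ a k}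

theorem moveMass_mem_cappedSimplex {a q : ι → ℝ} (hq : q ∈ cappedSimplex a) {i j : ι}
    (hij : i ≠ j) (hbound : q j + q i ≤ a j) : moveMass q i j ∈ cappedSimplex a := by
  obtain ⟨hsum, hbd⟩ := hq
  refine ⟨(sum_moveMass q hij).trans hsum, fun k => ?_⟩
  unfold moveMass
  split_ifs with hki hkj
  · exact ⟨le_rfl, (hbd k).1.trans (hbd k).2⟩
  · subst hkj; exact ⟨add_nonneg (hbd k).1 (hbd i).1, hbound⟩
  · exact hbd k

theorem sum_lt_sum_moveMass (h : ι → ℝ → ℝ) (q : ι → ℝ) {i j : ι} (hij : i ≠ j)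
    (hi : h i 0 = h i (q i)) (hj : h j (q j) < h j (q j + q i)) :
    ∑ k, h k (q k) < ∑ k, h k (moveMass q i j k) := by
  refine sum_lt_sum (fun k _ => ?_) ⟨j, mem_univ j, by simpa [moveMass, hij.symm] using hj⟩
  unfold moveMass
  split_ifs with hki hkj
  · subst hki; exact hi.ge
  · subst hkj; exact hj.le
  · exact le_rfl

end MoveMass

theorem log_affine_lt_of_lt {α β r x y : ℝ} (hα : 0 < α) (hβr : 0 < β * r) (hx : 0 ≤ x)
    (hxy : x < y) : Real.log (α * x + β * r) < Real.log (α * y + β * r) := by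
  apply Real.log_lt_log (by positivity)
  gcongr

theorem shift_mass_strict_decrease_general (n : ℕ) (p r a : Fin n → ℝ)
    (hr : ∀ k, 0 < r k)
    (α β : ℝ) (hα : 0 < α) (hβ : 0 < β)
    (f : (Fin n → ℝ) → ℝ)
    (hf : f = fun q : Fin n → ℝ => -∑ k, p k * Real.log (α * q k + β * r k))
    (C : Set (Fin n → ℝ))
    (hC : C = {q : Fin n → ℝ | ∑ k, q k = 1 ∧ ∀ k, 0 ≤ q k ∧ q k ≤ a k})
    (q : Fin n → ℝ) (hqC : q ∈ C)
    (i j : Fin n) (hij : i ≠ j)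
    (hpi : p i = 0) (hqi : 0 < q i) (hpj : 0 < p j) (hbound : q j + q i ≤ a j)
    (q' : Fin n → ℝ)
    (hq' : q' = fun k => if k = i then 0 else if k = j then q j + q i else q k) :
    q' ∈ C ∧ f q' < f q ∧ ¬ (∀ w ∈ C, f q ≤ f w) := by
  change C = cappedSimplex a at hC
  change q' = moveMass q i j at hq'
  subst hf hC hq'
  have hmem := moveMass_mem_cappedSimplex hqC hij hbound
  have hlt : -∑ k, p k * Real.log (α * moveMass q i j k + β * r k)
      < -∑ k, p k * Real.log (α * q k + β * r k) :=
    neg_lt_neg <| sum_lt_sum_moveMass (fun k x => p k * Real.log (α * x + β * r k)) q hij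
      (by simp [hpi])
      (mul_lt_mul_of_pos_left (log_affine_lt_of_lt hα (mul_pos hβ (hr j)) (hqC.2 j).1
        (lt_add_of_pos_right _ hqi)) hpj)
  exact ⟨hmem, hlt, fun hmin => (hmin _ hmem).not_gt hlt⟩

/-- Mass on a zero-weight coordinate can be moved to a positive-weight
coordinate, strictly decreasing the objective; hence such q is not a minimizer. -/
theorem shift_mass_strict_decrease (n : ℕ) (hn : 1 ≤ n) (p r a : Fin n → ℝ)
    (hp : ∀ k, 0 ≤ p k) (hr : ∀ k, 0 < r k)
    (α β : ℝ) (hα : 0 < α) (hβ : 0 < β) (hαβ : α + β = 1)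
    (f : (Fin n → ℝ) → ℝ)
    (hf : f = fun q : Fin n → ℝ => -∑ k, p k * Real.log (α * q k + β * r k))
    (C : Set (Fin n → ℝ))
    (hC : C = {q : Fin n → ℝ | ∑ k, q k = 1 ∧ ∀ k, 0 ≤ q k ∧ q k ≤ a k})
    (q : Fin n → ℝ) (hqC : q ∈ C)
    (i j : Fin n) (hij : i ≠ j)
    (hpi : p i = 0) (hqi : 0 < q i) (hpj : 0 < p j) (hbound : q j + q i ≤ a j)
    (q' : Fin n → ℝ)
    (hq' : q' = fun k => if k = i then 0 else if k = j then q j + q i else q k) :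
    q' ∈ C ∧ f q' < f q ∧ ¬ (∀ w ∈ C, f q ≤ f w) :=
  shift_mass_strict_decrease_general n p r a hr α β hα hβ f hf C hC q hqC i j hij hpi hqi hpj hbound
    q' hq'
end

section
/- Let n ≥ 1, let p, r, a ∈ ℝⁿ with pᵢ ≥ 0, rᵢ > 0, and aᵢ ≥ 0 for all i, and let α, β > 0 with α + β = 1. Suppose μ* > 0 satisfies Σᵢ min(max(μ*·pᵢ − β·rᵢ/α, 0), aᵢ) = 1. Define q* ∈ ℝⁿ by q*ᵢ = min(max(μ*·pᵢ − β·rᵢ/α, 0), aᵢ). Then q* belongs to the feasible set C = {q ∈ ℝⁿ : Σᵢ qᵢ = 1 and 0 ≤ qᵢ ≤ aᵢ for all i}, and f(q*) ≤ f(q) for every q ∈ C, where f(q) = −Σᵢ pᵢ · log(α·qᵢ + β·rᵢ); that is, q* is a global minimizer of f on C. -/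
/-!
The objective is separable and each summand `x ↦ pᵢ log (α x + β rᵢ)` is concave, so it lies
below its tangent line. The water-filling point is exactly where the tangent slope
`α pᵢ / (α q*ᵢ + β rᵢ)` equals the common multiplier `1 / μ*` on the coordinates strictly inside
`[0, aᵢ]`, is at most `1 / μ*` where `q*ᵢ = 0` and at least `1 / μ*` where `q*ᵢ = aᵢ`; in each case
the tangent bound gives `pᵢ log (α wᵢ + β rᵢ) ≤ pᵢ log (α q*ᵢ + β rᵢ) + (wᵢ - q*ᵢ) / μ*` for
`wᵢ ∈ [0, aᵢ]`. Summing, the linear terms cancel because `∑ wᵢ = ∑ q*ᵢ = 1`.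
-/

open Finset Real Set

theorem Real.log_sub_log_le_div {x y : ℝ} (hx : 0 < x) (hy : 0 < y) :
    log y - log x ≤ (y - x) / x := by
  rw [← log_div hy.ne' hx.ne', sub_div, div_self hx.ne']
  exact log_le_sub_one_of_pos (div_pos hy hx)

theorem sum_le_sum_of_le_add_mul_sub {ι : Type*} (s : Finset ι) (g : ι → ℝ → ℝ) (c : ℝ)
    {q w : ι → ℝ} (hsum : ∑ i ∈ s, w i = ∑ i ∈ s, q i)
    (h : ∀ i ∈ s, g i (w i) ≤ g i (q i) + c * (w i - q i)) :
    ∑ i ∈ s, g i (w i) ≤ ∑ i ∈ s, g i (q i) :=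
  calc ∑ i ∈ s, g i (w i) ≤ ∑ i ∈ s, (g i (q i) + c * (w i - q i)) := sum_le_sum h
    _ = ∑ i ∈ s, g i (q i) := by
      rw [sum_add_distrib, ← mul_sum, sum_sub_distrib, hsum, sub_self, mul_zero, add_zero]

def waterLevel (m s a : ℝ) : ℝ := min (max (m - s) 0) a

theorem waterLevel_mem_Icc {m s a : ℝ} (ha : 0 ≤ a) : waterLevel m s a ∈ Icc 0 a :=
  ⟨le_min (le_max_right _ _) ha, min_le_right _ _⟩

/-- First-order optimality of `waterLevel m s a` for maximizing `x ↦ m log (x + s) - x` on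
`[0, a]`, multiplied through by `waterLevel m s a + s`. -/
theorem mul_sub_waterLevel_le {m s a w : ℝ} (hw : w ∈ Icc 0 a) :
    m * (w - waterLevel m s a) ≤ (w - waterLevel m s a) * (waterLevel m s a + s) := by
  obtain ⟨hw0, hwa⟩ := hw
  unfold waterLevel
  rcases le_total (m - s) 0 with hneg | hpos
  · rw [max_eq_right hneg, min_eq_left (hw0.trans hwa)]
    nlinarith
  · rw [max_eq_left hpos]
    rcases le_total (m - s) a with hle | hge
    · rw [min_eq_left hle]
      exact le_of_eq (by ring)
    · rw [min_eq_right hge]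
      nlinarith [mul_nonneg (sub_nonneg.2 hwa) (sub_nonneg.2 hge)]

theorem mul_log_le_mul_log_waterLevel_add {p c α μ a w : ℝ} (hp : 0 ≤ p) (hc : 0 < c)
    (hα : 0 < α) (hμ : 0 < μ) (ha : 0 ≤ a) (hw : w ∈ Icc 0 a) :
    p * log (α * w + c) ≤ p * log (α * waterLevel (μ * p) (c / α) a + c)
      + μ⁻¹ * (w - waterLevel (μ * p) (c / α) a) := by
  set q := waterLevel (μ * p) (c / α) a
  have hq : 0 ≤ q := (waterLevel_mem_Icc ha).1
  have hx : 0 < α * q + c := by positivity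
  have hy : 0 < α * w + c := by have := hw.1; positivity
  have hqs : 0 < q + c / α := by positivity
  have hslack := mul_sub_waterLevel_le (m := μ * p) (s := c / α) hw
  suffices p * (log (α * w + c) - log (α * q + c)) ≤ μ⁻¹ * (w - q) by linarith
  calc p * (log (α * w + c) - log (α * q + c)) ≤ p * ((α * w + c - (α * q + c)) / (α * q + c)) :=
        mul_le_mul_of_nonneg_left (log_sub_log_le_div hx hy) hp
    _ = p * (w - q) / (q + c / α) := by field_simp; ring
    _ ≤ μ⁻¹ * (w - q) := by
      rw [div_le_iff₀ hqs, inv_mul_eq_div, div_mul_eq_mul_div, le_div_iff₀ hμ]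
      linarith

theorem waterfilling_is_minimizer_general (n : ℕ) (p r a : Fin n → ℝ)
    (hp : ∀ i, 0 ≤ p i) (hr : ∀ i, 0 < r i) (ha : ∀ i, 0 ≤ a i)
    (α β : ℝ) (hα : 0 < α) (hβ : 0 < β)
    (μ : ℝ) (hμ : 0 < μ)
    (hroot : ∑ i, min (max (μ * p i - β * r i / α) 0) (a i) = 1)
    (f : (Fin n → ℝ) → ℝ)
    (hf : f = fun w : Fin n → ℝ => -∑ i, p i * Real.log (α * w i + β * r i))
    (C : Set (Fin n → ℝ))
    (hC : C = {w : Fin n → ℝ | ∑ i, w i = 1 ∧ ∀ i, 0 ≤ w i ∧ w i ≤ a i})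
    (q : Fin n → ℝ)
    (hq : q = fun i => min (max (μ * p i - β * r i / α) 0) (a i)) :
    q ∈ C ∧ ∀ w ∈ C, f q ≤ f w := by
  have hqi : ∀ i, q i = waterLevel (μ * p i) (β * r i / α) (a i) := fun i => by rw [hq]; rfl
  have hqsum : ∑ i, q i = 1 := by rw [hq]; exact hroot
  subst hf hC
  refine ⟨⟨hqsum, fun i => hqi i ▸ waterLevel_mem_Icc (ha i)⟩, ?_⟩
  rintro w ⟨hwsum, hwC⟩
  have hle := sum_le_sum_of_le_add_mul_sub univ (fun i x => p i * log (α * x + β * r i)) μ⁻¹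
    (hwsum.trans hqsum.symm) fun i _ => hqi i ▸
      mul_log_le_mul_log_waterLevel_add (hp i) (mul_pos hβ (hr i)) hα hμ (ha i) (hwC i)
  simpa using hle

/-- The water-filling formula q*ᵢ = min(max(μ*·pᵢ − β·rᵢ/α, 0), aᵢ)
with ∑ q*ᵢ = 1 gives a global minimizer of f on the feasible set C. -/
theorem waterfilling_is_minimizer (n : ℕ) (hn : 1 ≤ n) (p r a : Fin n → ℝ)
    (hp : ∀ i, 0 ≤ p i) (hr : ∀ i, 0 < r i) (ha : ∀ i, 0 ≤ a i)
    (α β : ℝ) (hα : 0 < α) (hβ : 0 < β) (hαβ : α + β = 1)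
    (μ : ℝ) (hμ : 0 < μ)
    (hroot : ∑ i, min (max (μ * p i - β * r i / α) 0) (a i) = 1)
    (f : (Fin n → ℝ) → ℝ)
    (hf : f = fun w : Fin n → ℝ => -∑ i, p i * Real.log (α * w i + β * r i))
    (C : Set (Fin n → ℝ))
    (hC : C = {w : Fin n → ℝ | ∑ i, w i = 1 ∧ ∀ i, 0 ≤ w i ∧ w i ≤ a i})
    (q : Fin n → ℝ)
    (hq : q = fun i => min (max (μ * p i - β * r i / α) 0) (a i)) :
    q ∈ C ∧ ∀ w ∈ C, f q ≤ f w :=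
  waterfilling_is_minimizer_general n p r a hp hr ha α β hα hβ μ hμ hroot f hf C hC q hq
end

section
/- Let α, β > 0 with α + β = 1, and suppose (q, λ, π, ν) ∈ ℝⁿ × ℝⁿ × ℝⁿ × ℝ satisfies the KKT system for the problem data p, r, a ∈ ℝⁿ (rᵢ > 0, 0 ≤ aᵢ for all i) with ν > 0. If an index i satisfies pᵢ ≥ ((α·aᵢ + β·rᵢ)/α)·ν, then qᵢ = aᵢ. -/
/-! If `qᵢ < aᵢ`, complementary slackness kills `πᵢ`, and stationarity with `λᵢ ≥ 0` gives
`α pᵢ ≤ ν (α qᵢ + β rᵢ)`. Since `ν > 0`, this is strictly below `ν (α aᵢ + β rᵢ) ≤ α pᵢ`. -/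

lemma le_mul_of_neg_div_sub_add_eq_zero {x d l ν : ℝ} (hd : 0 < d) (hl : 0 ≤ l)
    (h : -x / d - l + ν = 0) : x ≤ ν * d := by
  have hx : x / d = ν - l := by rw [neg_div] at h; linarith
  rw [← div_le_iff₀ hd, hx]
  linarith

theorem kkt_upper_case_general (n : ℕ) (p r a : Fin n → ℝ)
    (hr : ∀ i, 0 < r i)
    (α β : ℝ) (hα : 0 < α) (hβ : 0 < β)
    (q lam pi : Fin n → ℝ) (ν : ℝ)
    (hstat : ∀ i, -(α * p i) / (α * q i + β * r i) - lam i + pi i + ν = 0)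
    (hcs2 : ∀ i, pi i * (q i - a i) = 0)
    (hlam : ∀ i, 0 ≤ lam i)
    (hfeas : ∀ i, 0 ≤ q i ∧ q i ≤ a i)
    (hν : 0 < ν)
    (i : Fin n) (hi : ((α * a i + β * r i) / α) * ν ≤ p i) :
    q i = a i := by
  by_contra hne
  have hlt : q i < a i := (hfeas i).2.lt_of_ne hne
  have hpi : pi i = 0 := (mul_eq_zero.mp (hcs2 i)).resolve_right (sub_ne_zero.mpr hne)
  have hden : 0 < α * q i + β * r i :=
    add_pos_of_nonneg_of_pos (mul_nonneg hα.le (hfeas i).1) (mul_pos hβ (hr i))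
  have hupper : α * p i ≤ ν * (α * q i + β * r i) :=
    le_mul_of_neg_div_sub_add_eq_zero hden (hlam i) (by simpa [hpi] using hstat i)
  have hlower : ν * (α * a i + β * r i) ≤ α * p i := by
    rw [div_mul_eq_mul_div, div_le_iff₀ hα] at hi
    linarith
  have hgap : ν * (α * q i + β * r i) < ν * (α * a i + β * r i) :=
    mul_lt_mul_of_pos_left (add_lt_add_left (mul_lt_mul_of_pos_left hlt hα) _) hν
  linarith

/-- In the KKT system with ν > 0, if pᵢ ≥ ((α·aᵢ + β·rᵢ)/α)·ν then qᵢ = aᵢ. -/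
theorem kkt_upper_case (n : ℕ) (hn : 1 ≤ n) (p r a : Fin n → ℝ)
    (hr : ∀ i, 0 < r i) (ha : ∀ i, 0 ≤ a i)
    (α β : ℝ) (hα : 0 < α) (hβ : 0 < β) (hαβ : α + β = 1)
    (q lam pi : Fin n → ℝ) (ν : ℝ)
    (hstat : ∀ i, -(α * p i) / (α * q i + β * r i) - lam i + pi i + ν = 0)
    (hcs1 : ∀ i, lam i * q i = 0)
    (hcs2 : ∀ i, pi i * (q i - a i) = 0)
    (hlam : ∀ i, 0 ≤ lam i) (hpi : ∀ i, 0 ≤ pi i)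
    (hfeas : ∀ i, 0 ≤ q i ∧ q i ≤ a i)
    (hsum : ∑ i, q i = 1)
    (hν : 0 < ν)
    (i : Fin n) (hi : ((α * a i + β * r i) / α) * ν ≤ p i) :
    q i = a i :=
  kkt_upper_case_general n p r a hr α β hα hβ q lam pi ν hstat hcs2 hlam hfeas hν i hi
end

section
/- Let α, β > 0 with α + β = 1, and suppose (q, λ, π, ν) ∈ ℝⁿ × ℝⁿ × ℝⁿ × ℝ satisfies the KKT system for the problem data p, r, a ∈ ℝⁿ (rᵢ > 0, 0 ≤ aᵢ for all i) with ν > 0. If an index i satisfies (β·rᵢ/α)·ν < pᵢ < ((α·aᵢ + β·rᵢ)/α)·ν, then qᵢ = pᵢ/ν − β·rᵢ/α. -/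
/-!
At a coordinate `i` the stationarity condition says that the marginal value
`u = α pᵢ / (α qᵢ + β rᵢ)` equals `ν - λᵢ + πᵢ`. If `λᵢ > 0` then `qᵢ = 0`, where the lower bound
on `pᵢ` makes `u > ν`; this forces `πᵢ > 0`, hence `qᵢ = aᵢ`, where the upper bound on `pᵢ`
makes `u < ν`. The symmetric argument rules out `πᵢ > 0`, so `u = ν`, which is solved for `qᵢ`.
-/

section BoxMultipliers

variable {q a lam pi ν u : ℝ}

theorem box_multiplier_lower_eq_zero (hlam : 0 ≤ lam)
    (hcs1 : lam * q = 0) (hcs2 : pi * (q - a) = 0) (hstat : u = ν - lam + pi)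
    (hlow : q = 0 → ν < u) (hup : q = a → u < ν) : lam = 0 := by
  by_contra hne
  have hlam_pos : 0 < lam := lt_of_le_of_ne hlam (Ne.symm hne)
  have hq : q = 0 := (mul_eq_zero.mp hcs1).resolve_left hne
  have hpi_pos : 0 < pi := by linarith [hlow hq]
  have hqa : q = a := sub_eq_zero.mp ((mul_eq_zero.mp hcs2).resolve_left hpi_pos.ne')
  linarith [hlow hq, hup hqa]

theorem box_multiplier_upper_eq_zero (hpi : 0 ≤ pi)
    (hcs1 : lam * q = 0) (hcs2 : pi * (q - a) = 0) (hstat : u = ν - lam + pi)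
    (hlow : q = 0 → ν < u) (hup : q = a → u < ν) : pi = 0 := by
  by_contra hne
  have hpi_pos : 0 < pi := lt_of_le_of_ne hpi (Ne.symm hne)
  have hqa : q = a := sub_eq_zero.mp ((mul_eq_zero.mp hcs2).resolve_left hne)
  have hlam_pos : 0 < lam := by linarith [hup hqa]
  have hq : q = 0 := (mul_eq_zero.mp hcs1).resolve_left hlam_pos.ne'
  linarith [hlow hq, hup hqa]

theorem box_marginal_eq (hlam : 0 ≤ lam) (hpi : 0 ≤ pi)
    (hcs1 : lam * q = 0) (hcs2 : pi * (q - a) = 0) (hstat : u = ν - lam + pi)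
    (hlow : q = 0 → ν < u) (hup : q = a → u < ν) : u = ν := by
  rw [hstat, box_multiplier_lower_eq_zero hlam hcs1 hcs2 hstat hlow hup,
    box_multiplier_upper_eq_zero hpi hcs1 hcs2 hstat hlow hup]
  ring

end BoxMultipliers

theorem kkt_interior_case_general (n : ℕ) (p r a : Fin n → ℝ)
    (hr : ∀ i, 0 < r i)
    (α β : ℝ) (hα : 0 < α) (hβ : 0 < β)
    (q lam pi : Fin n → ℝ) (ν : ℝ)
    (hstat : ∀ i, -(α * p i) / (α * q i + β * r i) - lam i + pi i + ν = 0)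
    (hcs1 : ∀ i, lam i * q i = 0)
    (hcs2 : ∀ i, pi i * (q i - a i) = 0)
    (hlam : ∀ i, 0 ≤ lam i) (hpi : ∀ i, 0 ≤ pi i)
    (hfeas : ∀ i, 0 ≤ q i ∧ q i ≤ a i)
    (hν : 0 < ν)
    (i : Fin n) (hi1 : (β * r i / α) * ν < p i)
    (hi2 : p i < ((α * a i + β * r i) / α) * ν) :
    q i = p i / ν - β * r i / α := by
  have hbr : 0 < β * r i := mul_pos hβ (hr i)
  have hden : 0 < α * q i + β * r i := by nlinarith [(hfeas i).1]
  have hstat' : α * p i / (α * q i + β * r i) = ν - lam i + pi i := by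
    linarith [hstat i, neg_div (α * q i + β * r i) (α * p i)]
  have hlow : q i = 0 → ν < α * p i / (α * q i + β * r i) := fun h0 ↦ by
    rw [lt_div_iff₀ hden, h0]
    rw [div_mul_eq_mul_div, div_lt_iff₀ hα] at hi1
    linarith
  have hup : q i = a i → α * p i / (α * q i + β * r i) < ν := fun hqa ↦ by
    rw [div_lt_iff₀ hden, hqa]
    rw [div_mul_eq_mul_div, lt_div_iff₀ hα] at hi2
    linarith
  have hmarg := box_marginal_eq (hlam i) (hpi i) (hcs1 i) (hcs2 i) hstat' hlow hup
  rw [div_eq_iff hden.ne'] at hmarg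
  field_simp
  linarith

/-- In the KKT system with ν > 0, if (β·rᵢ/α)·ν < pᵢ < ((α·aᵢ + β·rᵢ)/α)·ν
then qᵢ = pᵢ/ν − β·rᵢ/α. -/
theorem kkt_interior_case (n : ℕ) (hn : 1 ≤ n) (p r a : Fin n → ℝ)
    (hr : ∀ i, 0 < r i) (ha : ∀ i, 0 ≤ a i)
    (α β : ℝ) (hα : 0 < α) (hβ : 0 < β) (hαβ : α + β = 1)
    (q lam pi : Fin n → ℝ) (ν : ℝ)
    (hstat : ∀ i, -(α * p i) / (α * q i + β * r i) - lam i + pi i + ν = 0)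
    (hcs1 : ∀ i, lam i * q i = 0)
    (hcs2 : ∀ i, pi i * (q i - a i) = 0)
    (hlam : ∀ i, 0 ≤ lam i) (hpi : ∀ i, 0 ≤ pi i)
    (hfeas : ∀ i, 0 ≤ q i ∧ q i ≤ a i)
    (hsum : ∑ i, q i = 1)
    (hν : 0 < ν)
    (i : Fin n) (hi1 : (β * r i / α) * ν < p i)
    (hi2 : p i < ((α * a i + β * r i) / α) * ν) :
    q i = p i / ν - β * r i / α :=
  kkt_interior_case_general n p r a hr α β hα hβ q lam pi ν hstat hcs1 hcs2 hlam hpi hfeas hν i hi1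
    hi2
end

section
/- Let n ≥ 1, let α, β > 0 with α + β = 1, and suppose (q, λ, π, ν) ∈ ℝⁿ × ℝⁿ × ℝⁿ × ℝ satisfies the KKT system for the problem data p, r, a ∈ ℝⁿ, where pᵢ > 0 and rᵢ > 0 for all i and Σᵢ aᵢ > 1. Then ν > 0. -/
/-!
Since `∑ qᵢ = 1 < ∑ aᵢ`, some coordinate sits strictly below its cap, `qᵢ < aᵢ`. There complementary
slackness kills `πᵢ`, so stationarity reads `ν = α pᵢ / (α qᵢ + β rᵢ) + λᵢ`, a positive marginal value
plus a nonnegative multiplier.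
-/

theorem pos_of_stationary_of_lt_cap {α β p q r a lam pi ν : ℝ}
    (hα : 0 < α) (hβ : 0 < β) (hp : 0 < p) (hr : 0 < r) (hq : 0 ≤ q) (hqa : q < a)
    (hstat : -(α * p) / (α * q + β * r) - lam + pi + ν = 0)
    (hcs : pi * (q - a) = 0) (hlam : 0 ≤ lam) :
    0 < ν := by
  have hpi : pi = 0 := (mul_eq_zero.mp hcs).resolve_right (sub_ne_zero.mpr hqa.ne)
  have hmarginal : 0 < α * p / (α * q + β * r) := by positivity
  rw [neg_div, hpi] at hstat
  linarith

theorem kkt_nu_pos_general (n : ℕ) (p r a : Fin n → ℝ)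
    (hp : ∀ i, 0 < p i) (hr : ∀ i, 0 < r i)
    (hasum : 1 < ∑ i, a i)
    (α β : ℝ) (hα : 0 < α) (hβ : 0 < β)
    (q lam pi : Fin n → ℝ) (ν : ℝ)
    (hstat : ∀ i, -(α * p i) / (α * q i + β * r i) - lam i + pi i + ν = 0)
    (hcs2 : ∀ i, pi i * (q i - a i) = 0)
    (hlam : ∀ i, 0 ≤ lam i)
    (hfeas : ∀ i, 0 ≤ q i ∧ q i ≤ a i)
    (hsum : ∑ i, q i = 1) :
    0 < ν := by
  obtain ⟨i, -, hi⟩ := Finset.exists_lt_of_sum_lt (hsum ▸ hasum : ∑ i, q i < ∑ i, a i)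
  exact pos_of_stationary_of_lt_cap hα hβ (hp i) (hr i) (hfeas i).1 hi (hstat i) (hcs2 i) (hlam i)

/-- In the KKT system with pᵢ > 0 for all i and ∑ aᵢ > 1, the equality
multiplier ν is positive. -/
theorem kkt_nu_pos (n : ℕ) (hn : 1 ≤ n) (p r a : Fin n → ℝ)
    (hp : ∀ i, 0 < p i) (hr : ∀ i, 0 < r i) (ha : ∀ i, 0 ≤ a i)
    (hasum : 1 < ∑ i, a i)
    (α β : ℝ) (hα : 0 < α) (hβ : 0 < β) (hαβ : α + β = 1)
    (q lam pi : Fin n → ℝ) (ν : ℝ)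
    (hstat : ∀ i, -(α * p i) / (α * q i + β * r i) - lam i + pi i + ν = 0)
    (hcs1 : ∀ i, lam i * q i = 0)
    (hcs2 : ∀ i, pi i * (q i - a i) = 0)
    (hlam : ∀ i, 0 ≤ lam i) (hpi : ∀ i, 0 ≤ pi i)
    (hfeas : ∀ i, 0 ≤ q i ∧ q i ≤ a i)
    (hsum : ∑ i, q i = 1) :
    0 < ν :=
  kkt_nu_pos_general n p r a hp hr hasum α β hα hβ q lam pi ν hstat hcs2 hlam hfeas hsum
end

section
/- Let n ≥ 1, let p, r, a ∈ ℝⁿ with pᵢ ≥ 0, rᵢ > 0, and aᵢ ≥ 0 for all i, let α, β > 0, and let μ ∈ ℝ be such that Σ_{i ∈ N_c(μ)} pᵢ > 0, where N_c(μ) = {i : 0 < μ·pᵢ − β·rᵢ/α < aᵢ}. Then the Newton update T(μ) = (1 + Σ_{i ∈ N_c(μ)} β·rᵢ/α − Σ_{i ∈ N_u(μ)} aᵢ) / (Σ_{i ∈ N_c(μ)} pᵢ), with N_u(μ) = {i : μ·pᵢ − β·rᵢ/α ≥ aᵢ}, satisfies: T(μ) = μ if and only if Q(μ) = 1, where Q(μ)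 = Σᵢ min(max(μ·pᵢ − β·rᵢ/α, 0), aᵢ). -/
/-!
With `xᵢ = μ pᵢ − β rᵢ/α`, the clamp `min (max xᵢ 0) aᵢ` equals `xᵢ` on `N_c(μ)`, `aᵢ` on `N_u(μ)`
and `0` elsewhere (an index with `xᵢ ≤ 0` lies in `N_u(μ)` only if `aᵢ = 0`, as `aᵢ ≥ 0`). Hence
`Q(μ) = μ Σ_{N_c} pᵢ − Σ_{N_c} β rᵢ/α + Σ_{N_u} aᵢ`, and clearing the positive denominator in
`T(μ) = μ` gives exactly `Q(μ) = 1`.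
-/

lemma min_max_zero_eq_ite {x a : ℝ} (ha : 0 ≤ a) :
    min (max x 0) a = (if 0 < x ∧ x < a then x else 0) + (if a ≤ x then a else 0) := by
  by_cases hx : 0 < x
  · by_cases hxa : x < a
    · simp [hx, hxa, hxa.not_ge, hx.le, hxa.le]
    · rw [not_lt] at hxa
      simp [hx, hxa, hxa.not_gt, hx.le]
  · rw [not_lt] at hx
    rcases eq_or_lt_of_le ha with rfl | ha'
    · simp [hx]
    · simp [hx, hx.not_gt, (hx.trans_lt ha').not_ge, ha]

lemma sum_min_max_zero_eq {ι : Type*} [Fintype ι] (x a : ι → ℝ) (ha : ∀ i, 0 ≤ a i) :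
    ∑ i, min (max (x i) 0) (a i)
      = ∑ i ∈ {i | 0 < x i ∧ x i < a i}, x i + ∑ i ∈ {i | a i ≤ x i}, a i := by
  simp only [min_max_zero_eq_ite (ha _), Finset.sum_add_distrib, Finset.sum_filter]

lemma eq_filter_of_coe_eq_setOf {ι : Type*} [Fintype ι] {s : Finset ι} {P : ι → Prop}
    [DecidablePred P] (h : (s : Set ι) = {i | P i}) : s = Finset.univ.filter P := by
  ext i
  simpa using Set.ext_iff.mp h i

open Finset in
theorem newton_fixed_iff_general (n : ℕ) (p r a : Fin n → ℝ)
    (ha : ∀ i, 0 ≤ a i)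
    (α β : ℝ)
    (Q : ℝ → ℝ)
    (hQ : Q = fun μ => ∑ i, min (max (μ * p i - β * r i / α) 0) (a i))
    (Nc Nu : ℝ → Finset (Fin n))
    (hNc : ∀ μ, Nc μ = {i | 0 < μ * p i - β * r i / α ∧ μ * p i - β * r i / α < a i})
    (hNu : ∀ μ, Nu μ = {i | a i ≤ μ * p i - β * r i / α})
    (T : ℝ → ℝ)
    (hT : T = fun μ =>
      (1 + ∑ i ∈ Nc μ, β * r i / α - ∑ i ∈ Nu μ, a i) / ∑ i ∈ Nc μ, p i)
    (μ : ℝ) (hden : 0 < ∑ i ∈ Nc μ, p i) :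
    T μ = μ ↔ Q μ = 1 := by
  have hQμ : Q μ = μ * ∑ i ∈ Nc μ, p i - ∑ i ∈ Nc μ, β * r i / α + ∑ i ∈ Nu μ, a i := by
    rw [hQ]
    beta_reduce
    rw [sum_min_max_zero_eq _ _ ha, ← eq_filter_of_coe_eq_setOf (hNc μ),
      ← eq_filter_of_coe_eq_setOf (hNu μ), sum_sub_distrib, mul_sum]
  rw [hT, hQμ, div_eq_iff hden.ne']
  constructor <;> intro h <;> linarith

open Finset in
/-- The Newton update T satisfies T(μ) = μ ↔ Q(μ) = 1. -/
theorem newton_fixed_iff (n : ℕ) (hn : 1 ≤ n) (p r a : Fin n → ℝ)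
    (hp : ∀ i, 0 ≤ p i) (hr : ∀ i, 0 < r i) (ha : ∀ i, 0 ≤ a i)
    (α β : ℝ) (hα : 0 < α) (hβ : 0 < β)
    (Q : ℝ → ℝ)
    (hQ : Q = fun μ => ∑ i, min (max (μ * p i - β * r i / α) 0) (a i))
    (Nc Nu : ℝ → Finset (Fin n))
    (hNc : ∀ μ, Nc μ = {i | 0 < μ * p i - β * r i / α ∧ μ * p i - β * r i / α < a i})
    (hNu : ∀ μ, Nu μ = {i | a i ≤ μ * p i - β * r i / α})
    (T : ℝ → ℝ)
    (hT : T = fun μ =>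
      (1 + ∑ i ∈ Nc μ, β * r i / α - ∑ i ∈ Nu μ, a i) / ∑ i ∈ Nc μ, p i)
    (μ : ℝ) (hden : 0 < ∑ i ∈ Nc μ, p i) :
    T μ = μ ↔ Q μ = 1 :=
  newton_fixed_iff_general n p r a ha α β Q hQ Nc Nu hNc hNu T hT μ hden
end

section
/- Let n ≥ 1, let p, r, a ∈ ℝⁿ with pᵢ ≥ 0, rᵢ > 0, and aᵢ ≥ 0 for all i, let α, β > 0, and let μ ∈ ℝ be such that Σ_{i ∈ N_c(μ)} pᵢ > 0, where N_c(μ) = {i : 0 < μ·pᵢ − β·rᵢ/α < aᵢ}. Then T(μ) > μ if and only if Q(μ) < 1, where T is the Newton update and Q(μ) = Σᵢ min(max(μ·pᵢ − β·rᵢ/α, 0), aᵢ). -/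
/-!
On the coordinates that are clamped strictly between `0` and `aᵢ` the function `Q` is affine in
`μ` with slope `Σ_{N_c} pᵢ`, on those clamped at `aᵢ` it is constant, and the remaining ones
contribute `0`. Hence `Q(μ) = μ Σ_{N_c} pᵢ − Σ_{N_c} β rᵢ / α + Σ_{N_u} aᵢ`, and `T(μ)` is the
zero of the affine map `ν ↦ Q(μ) − 1 + (ν − μ) Σ_{N_c} pᵢ`; since the slope is positive, that zero
lies to the right of `μ` exactly when `Q(μ) < 1`.
-/

open Finset

theorem min_max_zero_eq_ite_add_ite {α : Type*} [AddZeroClass α] [LinearOrder α] {x a : α}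
    (ha : 0 ≤ a) :
    min (max x 0) a = (if 0 < x ∧ x < a then x else 0) + (if a ≤ x then a else 0) := by
  rcases lt_or_ge x 0 with hx | hx
  · have : ¬ a ≤ x := fun h => (ha.trans h).not_gt hx
    simp [max_eq_right hx.le, ha, hx.not_gt, this]
  rcases lt_or_ge x a with hxa | hax
  · rcases hx.lt_or_eq with hx | rfl
    · simp [max_eq_left hx.le, hxa.le, hx, hxa, hxa.not_ge]
    · simp [hxa.not_ge, ha]
  · simp [max_eq_left hx, hax, hax.not_gt]

theorem sum_min_max_zero {ι α : Type*} [Fintype ι] [AddCommMonoid α] [LinearOrder α]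
    (x a : ι → α) (ha : ∀ i, 0 ≤ a i) :
    ∑ i, min (max (x i) 0) (a i) =
      ∑ i ∈ {i | 0 < x i ∧ x i < a i}, x i + ∑ i ∈ {i | a i ≤ x i}, a i := by
  simp only [min_max_zero_eq_ite_add_ite (ha _), sum_add_distrib, sum_ite, sum_const_zero,
    add_zero]

theorem lt_newton_step_iff {ι K : Type*} [Field K] [LinearOrder K] [IsStrictOrderedRing K]
    (s t : Finset ι) (p b a : ι → K) (μ : K) (hs : 0 < ∑ i ∈ s, p i) :
    μ < (1 + ∑ i ∈ s, b i - ∑ i ∈ t, a i) / ∑ i ∈ s, p i ↔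
      ∑ i ∈ s, (μ * p i - b i) + ∑ i ∈ t, a i < 1 := by
  rw [lt_div_iff₀ hs, sum_sub_distrib, ← mul_sum]
  constructor <;> intro h <;> linarith

open Finset in
theorem newton_increase_iff_general (n : ℕ) (p r a : Fin n → ℝ)
    (ha : ∀ i, 0 ≤ a i)
    (α β : ℝ)
    (Q : ℝ → ℝ)
    (hQ : Q = fun μ => ∑ i, min (max (μ * p i - β * r i / α) 0) (a i))
    (Nc Nu : ℝ → Finset (Fin n))
    (hNc : ∀ μ, Nc μ = {i | 0 < μ * p i - β * r i / α ∧ μ * p i - β * r i / α < a i})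
    (hNu : ∀ μ, Nu μ = {i | a i ≤ μ * p i - β * r i / α})
    (T : ℝ → ℝ)
    (hT : T = fun μ =>
      (1 + ∑ i ∈ Nc μ, β * r i / α - ∑ i ∈ Nu μ, a i) / ∑ i ∈ Nc μ, p i)
    (μ : ℝ) (hden : 0 < ∑ i ∈ Nc μ, p i) :
    μ < T μ ↔ Q μ < 1 := by
  have hNc' : Nc μ =
      univ.filter fun i => 0 < μ * p i - β * r i / α ∧ μ * p i - β * r i / α < a i := by
    rw [← coe_inj, hNc, coe_filter]; simp
  have hNu' : Nu μ = univ.filter fun i => a i ≤ μ * p i - β * r i / α := by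
    rw [← coe_inj, hNu, coe_filter]; simp
  subst hQ hT
  beta_reduce
  rw [lt_newton_step_iff _ _ _ _ _ _ hden, sum_min_max_zero _ _ ha, hNc', hNu']

open Finset in
/-- The Newton update T satisfies T(μ) > μ ↔ Q(μ) < 1. -/
theorem newton_increase_iff (n : ℕ) (hn : 1 ≤ n) (p r a : Fin n → ℝ)
    (hp : ∀ i, 0 ≤ p i) (hr : ∀ i, 0 < r i) (ha : ∀ i, 0 ≤ a i)
    (α β : ℝ) (hα : 0 < α) (hβ : 0 < β)
    (Q : ℝ → ℝ)
    (hQ : Q = fun μ => ∑ i, min (max (μ * p i - β * r i / α) 0) (a i))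
    (Nc Nu : ℝ → Finset (Fin n))
    (hNc : ∀ μ, Nc μ = {i | 0 < μ * p i - β * r i / α ∧ μ * p i - β * r i / α < a i})
    (hNu : ∀ μ, Nu μ = {i | a i ≤ μ * p i - β * r i / α})
    (T : ℝ → ℝ)
    (hT : T = fun μ =>
      (1 + ∑ i ∈ Nc μ, β * r i / α - ∑ i ∈ Nu μ, a i) / ∑ i ∈ Nc μ, p i)
    (μ : ℝ) (hden : 0 < ∑ i ∈ Nc μ, p i) :
    μ < T μ ↔ Q μ < 1 :=
  newton_increase_iff_general n p r a ha α β Q hQ Nc Nu hNc hNu T hT μ hden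
end
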